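/- Let H be a finite connected bipartite simple graph with bipartition (V_1, V_2) whose vertices of odd degree are exactly four distinct vertices a_1, a_2 ∈ V_1 and a_3, a_4 ∈ V_2. Then the edge set of H can be partitioned into the edge sets of two subgraphs H_{1,3} and H_{2,4}, each with an odd number of edges, where H_{1,3} is an a_1-a_3-eulerian subgraph and H_{2,4} is an a_2-a_4-eulerian subgraph. -/

import Mathlib

/-!
Choose a path `P` from `a₂` to `a₄`. After deleting the edges of `P`, the odd-degree vertices
are `a₁` and `a₃`, so by the handshake lemma they lie in one component `C` of what remains; take
`H₁,₃ = C`. The rest, `H₂,₄ = P ∪ (H - E(P) - C)`, has odd-degree vertices `a₂` and `a₄`, and it is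
connected because `H` is: every other component of `H - E(P)` touches `P`. Finally, in a bipartite
graph the number of edges is the degree sum over `V₁`, whose parity is the number of odd-degree
vertices in `V₁`, which is one for each of the two subgraphs.
-/

open SimpleGraph

/-- A `u`-`v`-eulerian subgraph of `G`: a connected subgraph containing `u` and `v`
in which every vertex has even degree, except that when `u ≠ v` the vertices `u` and
`v` are exactly the vertices of odd degree. -/
def IsUVEulerianSubgraph {V : Type*} (G : SimpleGraph V) (u v : V)
    (K : G.Subgraph) : Prop :=
  K.Connected ∧ u ∈ K.verts ∧ v ∈ K.verts ∧
  ∀ w ∈ K.verts, (Odd ((K.neighborSet w).ncard) ↔ (w = u ∨ w = v) ∧ u ≠ v)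

open scoped symmDiff

namespace SimpleGraph

variable {V : Type*} {G G' : SimpleGraph V}

namespace Subgraph

def oddDegreeVerts (K : G.Subgraph) : Set V := {v | Odd (K.neighborSet v).ncard}

lemma ncard_neighborSet_eq_degree_spanningCoe (K : G.Subgraph) (v : V)
    [Fintype (K.spanningCoe.neighborSet v)] :
    (K.neighborSet v).ncard = K.spanningCoe.degree v := by
  rw [← card_neighborSet_eq_degree, ← Nat.card_eq_fintype_card, Nat.card_coe_set_eq]
  rfl

lemma even_ncard_oddDegreeVerts [Finite V] (K : G.Subgraph) : Even K.oddDegreeVerts.ncard := by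
  classical
  have := Fintype.ofFinite V
  convert K.spanningCoe.even_card_odd_degree_vertices using 1
  rw [← Set.ncard_coe_finset]
  congr 1
  ext v
  simp [oddDegreeVerts, ncard_neighborSet_eq_degree_spanningCoe]

lemma ncard_neighborSet_eq_add [Finite V] {K M L : G.Subgraph}
    (hunion : K.edgeSet ∪ M.edgeSet = L.edgeSet) (hdisj : Disjoint K.edgeSet M.edgeSet) (v : V) :
    (L.neighborSet v).ncard = (K.neighborSet v).ncard + (M.neighborSet v).ncard := by
  have hnbr (N : G.Subgraph) : N.neighborSet v = (fun w => s(v, w)) ⁻¹' N.edgeSet := by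
    ext; simp
  rw [hnbr, ← hunion, Set.preimage_union, Set.ncard_union_eq (hdisj.preimage _), hnbr, hnbr]

lemma oddDegreeVerts_eq_symmDiff [Finite V] {K M L : G.Subgraph}
    (hunion : K.edgeSet ∪ M.edgeSet = L.edgeSet) (hdisj : Disjoint K.edgeSet M.edgeSet) :
    L.oddDegreeVerts = K.oddDegreeVerts ∆ M.oddDegreeVerts := by
  ext v
  simp only [oddDegreeVerts, Set.mem_symmDiff, Set.mem_ofPred_eq,
    ncard_neighborSet_eq_add hunion hdisj, Nat.odd_add, ← Nat.not_odd_iff_even]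
  tauto

lemma oddDegreeVerts_eq_pair_of_eq_inter [Finite V] {K : G.Subgraph} {u v : V}
    (hu : u ∈ K.verts) (h : K.oddDegreeVerts = K.verts ∩ {u, v}) : K.oddDegreeVerts = {u, v} := by
  have hv : v ∈ K.verts := by
    by_contra hv
    have := K.even_ncard_oddDegreeVerts
    rw [h, Set.inter_insert_of_mem hu, Set.inter_singleton_eq_empty.mpr hv] at this
    simp at this
  rw [h, Set.inter_eq_right.mpr (Set.insert_subset hu (Set.singleton_subset_iff.mpr hv))]

lemma mem_verts_of_mem_oddDegreeVerts {K : G.Subgraph} {v : V} (hv : v ∈ K.oddDegreeVerts) :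
    v ∈ K.verts := by
  obtain ⟨w, hw⟩ := Set.nonempty_of_ncard_ne_zero hv.pos.ne'
  exact K.edge_vert hw

end Subgraph

lemma IsBipartiteWith.odd_ncard_edgeSet_iff [Finite V] {V₁ V₂ : Set V}
    (hG : G.IsBipartiteWith V₁ V₂) (K : G.Subgraph) :
    Odd K.edgeSet.ncard ↔ Odd (V₁ ∩ K.oddDegreeVerts).ncard := by
  classical
  have := Fintype.ofFinite V
  have hK : K.spanningCoe.IsBipartiteWith (V₁.toFinset : Set V) V₂.toFinset := by
    simp only [Set.coe_toFinset]
    exact ⟨hG.disjoint, fun _ _ h => hG.mem_of_adj (K.adj_sub h)⟩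
  rw [← Subgraph.edgeSet_spanningCoe, ← coe_edgeFinset, Set.ncard_coe_finset,
    ← isBipartiteWith_sum_degrees_eq_card_edges hK, Finset.odd_sum_iff_odd_card_odd,
    ← Set.ncard_coe_finset]
  congr! 2
  ext v
  simp [Subgraph.oddDegreeVerts, Subgraph.ncard_neighborSet_eq_degree_spanningCoe]

lemma IsBipartiteWith.odd_ncard_edgeSet_of_oddDegreeVerts_eq_pair [Finite V] {V₁ V₂ : Set V}
    (hG : G.IsBipartiteWith V₁ V₂) {K : G.Subgraph} {x y : V} (hx : x ∈ V₁) (hy : y ∈ V₂)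
    (hK : K.oddDegreeVerts = {x, y}) : Odd K.edgeSet.ncard := by
  rw [hG.odd_ncard_edgeSet_iff, hK, Set.inter_insert_of_mem hx,
    Set.inter_singleton_eq_empty.mpr (hG.disjoint.notMem_of_mem_right hy)]
  simp

namespace Walk

lemma IsTrail.oddDegreeVerts_toSubgraph [Finite V] {u v : V} {p : G.Walk u v} (hp : p.IsTrail)
    (huv : u ≠ v) : p.toSubgraph.oddDegreeVerts = {u, v} := by
  classical
  have := Fintype.ofFinite V
  have hedges : ∀ e ∈ p.edges, e ∈ p.toSubgraph.spanningCoe.edgeSet := fun e he => by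
    rwa [Subgraph.edgeSet_spanningCoe, mem_edges_toSubgraph]
  -- `p` is an Eulerian trail of the graph formed by its own edges.
  have hq : (p.transfer _ hedges).IsEulerian := by
    refine IsTrail.isEulerian_of_forall_mem ?_ fun e he => ?_
    · exact (isTrail_def _).mpr (by rw [edges_transfer]; exact hp.edges_nodup)
    · rwa [edges_transfer, ← mem_edges_toSubgraph, ← Subgraph.edgeSet_spanningCoe]
  ext x
  simp only [Subgraph.oddDegreeVerts, Set.mem_ofPred_eq,
    Subgraph.ncard_neighborSet_eq_degree_spanningCoe, ← Nat.not_even_iff_odd, hq.even_degree_iff,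
    Set.mem_insert_iff, Set.mem_singleton_iff]
  tauto

lemma toSubgraph_mapLe_le_induce_supp (h : G' ≤ G) {u v : V} (q : G'.Walk u v) :
    (q.mapLe h).toSubgraph ≤ (toSubgraph G' h).induce (G'.connectedComponentMk u).supp := by
  induction q with
  | nil => simp [Walk.mapLe]
  | @cons u w _ hadj q ih =>
    rw [ConnectedComponent.connectedComponentMk_eq_of_adj hadj]
    refine sup_le (subgraphOfAdj_le_of_adj _ ?_) ih
    exact ⟨ConnectedComponent.connectedComponentMk_eq_of_adj hadj, rfl, hadj⟩

lemma exists_reachable_and_eq_or_adj_not_adj {u v : V} (p : G.Walk u v) :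
    ∃ w, G'.Reachable u w ∧ (w = v ∨ ∃ x, G.Adj w x ∧ ¬G'.Adj w x) := by
  induction p with
  | nil => exact ⟨_, Reachable.refl _, Or.inl rfl⟩
  | @cons u w _ hadj _ ih =>
    by_cases h' : G'.Adj u w
    · obtain ⟨x, hwx, hx⟩ := ih
      exact ⟨x, h'.reachable.trans hwx, hx⟩
    · exact ⟨u, Reachable.refl _, Or.inr ⟨w, hadj, h'⟩⟩

end Walk

section ComponentOfSubgraph

variable (h : G' ≤ G) (c : G'.ConnectedComponent)
include h

lemma connected_toSubgraph_induce_supp : ((toSubgraph G' h).induce c.supp).Connected := by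
  refine (Subgraph.connected_iff_forall_exists_walk_subgraph _).mpr
    ⟨c.nonempty_supp, fun {u v} hu hv => ?_⟩
  obtain ⟨q⟩ := c.reachable_of_mem_supp hu hv
  refine ⟨q.mapLe h, ?_⟩
  rw [← (c.mem_supp_iff u).mp hu]
  exact q.toSubgraph_mapLe_le_induce_supp h

lemma oddDegreeVerts_toSubgraph_induce_supp :
    ((toSubgraph G' h).induce c.supp).oddDegreeVerts =
      c.supp ∩ (toSubgraph G' h).oddDegreeVerts := by
  ext v
  by_cases hv : v ∈ c.supp
  · have : ((toSubgraph G' h).induce c.supp).neighborSet v = (toSubgraph G' h).neighborSet v := by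
      ext w
      simp only [Subgraph.mem_neighborSet, Subgraph.induce_adj, toSubgraph_adj]
      exact ⟨fun hw => hw.2.2, fun hw => ⟨hv, (c.mem_supp_congr_adj hw).mp hv, hw⟩⟩
    simp [Subgraph.oddDegreeVerts, this, hv]
  · have : ((toSubgraph G' h).induce c.supp).neighborSet v = ∅ := by
      ext w
      simp [hv]
    simp [Subgraph.oddDegreeVerts, this, hv]

lemma edgeSet_toSubgraph_induce_supp_union_compl :
    ((toSubgraph G' h).induce c.supp).edgeSet ∪ ((toSubgraph G' h).induce c.suppᶜ).edgeSet =
      (toSubgraph G' h).edgeSet := by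
  ext e
  induction e using Sym2.ind with
  | _ u v =>
    simp only [Set.mem_union, Subgraph.mem_edgeSet, Subgraph.induce_adj, toSubgraph_adj,
      Set.mem_compl_iff]
    have := fun huv : G'.Adj u v => c.mem_supp_congr_adj huv
    tauto

lemma disjoint_edgeSet_toSubgraph_induce_supp_compl :
    Disjoint ((toSubgraph G' h).induce c.supp).edgeSet
      ((toSubgraph G' h).induce c.suppᶜ).edgeSet := by
  rw [Set.disjoint_left]
  intro e
  induction e using Sym2.ind with
  | _ u v =>
    simp only [Subgraph.mem_edgeSet, Subgraph.induce_adj, Set.mem_compl_iff]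
    tauto

end ComponentOfSubgraph

lemma Subgraph.connected_of_forall_exists_walk_to_verts {K T : G.Subgraph} (hT : T.Connected)
    (hTK : T ≤ K) (h : ∀ x ∈ K.verts, ∃ y ∈ T.verts, ∃ p : G.Walk x y, p.toSubgraph ≤ K) :
    K.Connected := by
  rw [Subgraph.connected_iff_forall_exists_walk_subgraph]
  obtain ⟨t, ht⟩ := hT.nonempty
  refine ⟨⟨t, hTK.1 ht⟩, fun {u v} hu hv => ?_⟩
  obtain ⟨y, hy, p, hp⟩ := h u hu
  obtain ⟨z, hz, q, hq⟩ := h v hv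
  obtain ⟨r, hr⟩ := ((Subgraph.connected_iff_forall_exists_walk_subgraph T).mp hT).2 hy hz
  refine ⟨p.append (r.append q.reverse), ?_⟩
  simp only [Walk.toSubgraph_append, Walk.toSubgraph_reverse]
  exact sup_le hp (sup_le (hr.trans hTK) hq)

theorem Subgraph.Connected.exists_connected_edge_partition [Finite V] (hG : G.Connected)
    {T : G.Subgraph} (hT : T.Connected) (a : V) :
    ∃ K₁ K₂ : G.Subgraph, K₁.Connected ∧ K₂.Connected ∧ a ∈ K₁.verts ∧
      Disjoint K₁.edgeSet K₂.edgeSet ∧ K₁.edgeSet ∪ K₂.edgeSet = G.edgeSet ∧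
      K₁.oddDegreeVerts = K₁.verts ∩ ((⊤ : G.Subgraph).oddDegreeVerts ∆ T.oddDegreeVerts) := by
  set G' := G.deleteEdges T.edgeSet
  have hle : G' ≤ G := G.deleteEdges_le T.edgeSet
  set D := toSubgraph G' hle
  set c := G'.connectedComponentMk a
  have hD : D.edgeSet = G.edgeSet \ T.edgeSet := edgeSet_deleteEdges _
  have hunion : T.edgeSet ∪ D.edgeSet = (⊤ : G.Subgraph).edgeSet := by
    rw [hD, Set.union_sdiff_cancel T.edgeSet_subset, Subgraph.edgeSet_top]
  have hdisj : Disjoint T.edgeSet D.edgeSet := hD ▸ Set.disjoint_sdiff_right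
  refine ⟨D.induce c.supp, T ⊔ D.induce c.suppᶜ, connected_toSubgraph_induce_supp hle c,
    ?_, rfl, ?_, ?_, ?_⟩
  · refine Subgraph.connected_of_forall_exists_walk_to_verts hT le_sup_left fun x hx => ?_
    rcases hx with hxT | hxc
    · exact ⟨x, hxT, Walk.nil, by simpa using Or.inl hxT⟩
    obtain ⟨t, ht⟩ := hT.nonempty
    -- Follow a walk from `x` to `T` until it first uses an edge of `T`.
    obtain ⟨w, ⟨q⟩, hw⟩ :=
      (hG.preconnected x t).some.exists_reachable_and_eq_or_adj_not_adj (G' := G')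
    have hwT : w ∈ T.verts := by
      obtain rfl | ⟨y, hy, hny⟩ := hw
      · exact ht
      · exact T.edge_vert (by simpa [G', hy] using hny)
    refine ⟨w, hwT, q.mapLe hle, (q.toSubgraph_mapLe_le_induce_supp hle).trans
      (le_sup_of_le_right (Subgraph.induce_mono_right fun z hz hzc => hxc ?_))⟩
    rw [ConnectedComponent.mem_supp_iff] at hz hzc ⊢
    exact hz ▸ hzc
  · rw [Subgraph.edgeSet_sup, Set.disjoint_union_right]
    have hsub := (edgeSet_toSubgraph_induce_supp_union_compl hle c).le
    exact ⟨(hdisj.mono_right (Set.subset_union_left.trans hsub)).symm,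
      disjoint_edgeSet_toSubgraph_induce_supp_compl hle c⟩
  · rw [Subgraph.edgeSet_sup, Set.union_left_comm, edgeSet_toSubgraph_induce_supp_union_compl,
      hunion, Subgraph.edgeSet_top]
  · rw [oddDegreeVerts_toSubgraph_induce_supp, oddDegreeVerts_eq_symmDiff hunion hdisj,
      symmDiff_symmDiff_self']
    rfl

end SimpleGraph

theorem isUVEulerianSubgraph_of_oddDegreeVerts_eq_pair {V : Type*} {G : SimpleGraph V}
    {K : G.Subgraph} {u v : V} (hK : K.Connected) (huv : u ≠ v)
    (hodd : K.oddDegreeVerts = {u, v}) : IsUVEulerianSubgraph G u v K := by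
  have hmem (w : V) : w ∈ K.oddDegreeVerts ↔ w = u ∨ w = v := by simp [hodd]
  refine ⟨hK, Subgraph.mem_verts_of_mem_oddDegreeVerts ((hmem u).2 (Or.inl rfl)),
    Subgraph.mem_verts_of_mem_oddDegreeVerts ((hmem v).2 (Or.inr rfl)), fun w _ => ?_⟩
  exact (hmem w).trans (and_iff_left huv).symm

theorem bipartite_decomposition_two_odd_semiEulerian_general {V : Type*} [Fintype V]
    (H : SimpleGraph V) (hconn : H.Connected)
    (V1 V2 : Set V) (hdisj : Disjoint V1 V2)
    (hbip : ∀ u w : V, H.Adj u w → (u ∈ V1 ∧ w ∈ V2) ∨ (u ∈ V2 ∧ w ∈ V1))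
    (a1 a2 a3 a4 : V)
    (h12 : a1 ≠ a2) (h13 : a1 ≠ a3) (h14 : a1 ≠ a4)
    (h23 : a2 ≠ a3) (h24 : a2 ≠ a4) (h34 : a3 ≠ a4)
    (ha1 : a1 ∈ V1) (ha2 : a2 ∈ V1) (ha3 : a3 ∈ V2) (ha4 : a4 ∈ V2)
    (hodd : {v : V | Odd ((H.neighborSet v).ncard)} = {a1, a2, a3, a4}) :
    ∃ K1 K2 : H.Subgraph,
      IsUVEulerianSubgraph H a1 a3 K1 ∧ IsUVEulerianSubgraph H a2 a4 K2 ∧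
      Odd K1.edgeSet.ncard ∧ Odd K2.edgeSet.ncard ∧
      Disjoint K1.edgeSet K2.edgeSet ∧ K1.edgeSet ∪ K2.edgeSet = H.edgeSet := by
  classical
  have hH : (⊤ : H.Subgraph).oddDegreeVerts = {a1, a2, a3, a4} := hodd
  obtain ⟨p⟩ := hconn.preconnected a2 a4
  have hP : p.bypass.toSubgraph.oddDegreeVerts = {a2, a4} :=
    p.bypass_isPath.isTrail.oddDegreeVerts_toSubgraph h24
  obtain ⟨K1, K2, hK1, hK2, ha1K1, hdisjE, hunionE, hK1odd⟩ :=
    p.bypass.toSubgraph_connected.exists_connected_edge_partition hconn a1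
  rw [hH, hP, show ({a1, a2, a3, a4} : Set V) ∆ {a2, a4} = {a1, a3} by
    ext; simp [Set.mem_symmDiff]; grind] at hK1odd
  replace hK1odd := Subgraph.oddDegreeVerts_eq_pair_of_eq_inter ha1K1 hK1odd
  have hK2odd : K2.oddDegreeVerts = {a2, a4} := by
    rw [← symmDiff_symmDiff_cancel_left K1.oddDegreeVerts K2.oddDegreeVerts,
      ← Subgraph.oddDegreeVerts_eq_symmDiff (L := ⊤) hunionE hdisjE, hH, hK1odd]
    ext; simp [Set.mem_symmDiff]; grind
  have hbip' : H.IsBipartiteWith V1 V2 := ⟨hdisj, fun _ _ h => hbip _ _ h⟩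
  exact ⟨K1, K2, isUVEulerianSubgraph_of_oddDegreeVerts_eq_pair hK1 h13 hK1odd,
    isUVEulerianSubgraph_of_oddDegreeVerts_eq_pair hK2 h24 hK2odd,
    hbip'.odd_ncard_edgeSet_of_oddDegreeVerts_eq_pair ha1 ha3 hK1odd,
    hbip'.odd_ncard_edgeSet_of_oddDegreeVerts_eq_pair ha2 ha4 hK2odd, hdisjE, hunionE⟩

/-- Case 1 of Proposition `6.2`: a connected bipartite graph whose odd-degree
vertices are exactly `a₁, a₂ ∈ V₁` and `a₃, a₄ ∈ V₂` decomposes into an odd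
`a₁`-`a₃`-eulerian subgraph and an odd `a₂`-`a₄`-eulerian subgraph. -/
theorem bipartite_decomposition_two_odd_semiEulerian {V : Type*} [Fintype V]
    (H : SimpleGraph V) (hconn : H.Connected)
    (V1 V2 : Set V) (hdisj : Disjoint V1 V2) (hunion : V1 ∪ V2 = Set.univ)
    (hbip : ∀ u w : V, H.Adj u w → (u ∈ V1 ∧ w ∈ V2) ∨ (u ∈ V2 ∧ w ∈ V1))
    (a1 a2 a3 a4 : V)
    (h12 : a1 ≠ a2) (h13 : a1 ≠ a3) (h14 : a1 ≠ a4)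
    (h23 : a2 ≠ a3) (h24 : a2 ≠ a4) (h34 : a3 ≠ a4)
    (ha1 : a1 ∈ V1) (ha2 : a2 ∈ V1) (ha3 : a3 ∈ V2) (ha4 : a4 ∈ V2)
    (hodd : {v : V | Odd ((H.neighborSet v).ncard)} = {a1, a2, a3, a4}) :
    ∃ K1 K2 : H.Subgraph,
      IsUVEulerianSubgraph H a1 a3 K1 ∧ IsUVEulerianSubgraph H a2 a4 K2 ∧
      Odd K1.edgeSet.ncard ∧ Odd K2.edgeSet.ncard ∧
      Disjoint K1.edgeSet K2.edgeSet ∧ K1.edgeSet ∪ K2.edgeSet = H.edgeSet :=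
  bipartite_decomposition_two_odd_semiEulerian_general H hconn V1 V2 hdisj hbip a1 a2 a3 a4 h12 h13
    h14 h23 h24 h34 ha1 ha2 ha3 ha4 hodd
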